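/- The natural left action of SL(3,Z) on P^2(Z/N) (column vectors modulo units) is transitive, and the stabilizer of the point (1:0:0) equals the congruence subgroup Γ₀(N) = {(a_ij) ∈ SL(3,Z) : a₂₁ ≡ 0 mod N and a₃₁ ≡ 0 mod N}. Consequently SL(3,Z)/Γ₀(N) is in bijection with P^2(Z/N). -/

import Mathlib

/-- A triple in `(ZMod N)^3` is unimodular if its entries generate the unit ideal. -/
def Unimodular {N : ℕ} (v : Fin 3 → ZMod N) : Prop :=
  Ideal.span ({v 0, v 1, v 2} : Set (ZMod N)) = ⊤

/-- The set of unimodular triples. -/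
def UniTriple (N : ℕ) := {v : Fin 3 → ZMod N // Unimodular v}

/-- `P²(ZMod N)`: unimodular triples modulo multiplication by units. -/
def P2 (N : ℕ) :=
  Quot (fun v w : UniTriple N => ∃ u : (ZMod N)ˣ, (u : ZMod N) • v.1 = w.1)

/-- The action of `SL(3,ℤ)` on column vectors over `ZMod N`. -/
def act (N : ℕ) (g : Matrix.SpecialLinearGroup (Fin 3) ℤ) (v : Fin 3 → ZMod N) :
    Fin 3 → ZMod N :=
  (g.val.map (Int.cast : ℤ → ZMod N)).mulVec v

/-!
Two row operations by `SL(2, ℤ)` blocks (Bézout on the last two coordinates, then on the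
first two) move any integer vector to `(d, 0, 0)`. Lifting a unimodular `v` to `ℤ³` and reducing
mod `N`, we get `g • v = d • e₁`; as `SL(3, ℤ)` preserves unimodularity, `d` is a unit, so every
point lies in the orbit of `(1 : 0 : 0)`. The same remark gives the stabilizer: if the first
column `g • e₁` of `g` is `(a, 0, 0)` mod `N`, it is unimodular, so `a` is a unit. The bijection
is then the orbit map `g ↦ [g • e₁]`, whose fibres are the cosets of `Γ₀(N)`.
-/

open Matrix

lemma act_eq_smul (N : ℕ) (g : SpecialLinearGroup (Fin 3) ℤ) (v : Fin 3 → ZMod N) :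
    act N g v = SpecialLinearGroup.map (Int.castRingHom (ZMod N)) g • v := rfl

lemma act_mul (N : ℕ) (g h : SpecialLinearGroup (Fin 3) ℤ) (v : Fin 3 → ZMod N) :
    act N (g * h) v = act N g (act N h v) := by
  simp only [act_eq_smul, map_mul, mul_smul]

lemma act_one (N : ℕ) (v : Fin 3 → ZMod N) : act N 1 v = v := by
  simp only [act_eq_smul, map_one, one_smul]

lemma act_smul (N : ℕ) (g : SpecialLinearGroup (Fin 3) ℤ) (c : ZMod N) (v : Fin 3 → ZMod N) :
    act N g (c • v) = c • act N g v := by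
  simp only [act_eq_smul, smul_comm]

lemma act_inv_act (N : ℕ) (g : SpecialLinearGroup (Fin 3) ℤ) (v : Fin 3 → ZMod N) :
    act N g⁻¹ (act N g v) = v := by
  rw [← act_mul, inv_mul_cancel, act_one]

lemma act_apply (N : ℕ) (g : SpecialLinearGroup (Fin 3) ℤ) (v : Fin 3 → ZMod N) (i : Fin 3) :
    act N g v i = ∑ j, ((g.val i j : ℤ) : ZMod N) * v j := rfl

lemma act_intCast (N : ℕ) (g : SpecialLinearGroup (Fin 3) ℤ) (x : Fin 3 → ℤ) :
    act N g (fun i => (x i : ZMod N)) = fun i => ((g.val *ᵥ x) i : ZMod N) := by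
  ext i
  simp [act_apply, mulVec, dotProduct]

lemma act_e1 (N : ℕ) (g : SpecialLinearGroup (Fin 3) ℤ) :
    act N g ![1, 0, 0] = fun i => ((g.val i 0 : ℤ) : ZMod N) := by
  ext i
  simp [act_apply, Fin.sum_univ_three]

lemma span_act_le (N : ℕ) (g : SpecialLinearGroup (Fin 3) ℤ) (v : Fin 3 → ZMod N) :
    Ideal.span {act N g v 0, act N g v 1, act N g v 2} ≤ Ideal.span {v 0, v 1, v 2} := by
  have hmem : ∀ i, act N g v i ∈ Ideal.span {v 0, v 1, v 2} := fun i => by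
    rw [act_apply, Fin.sum_univ_three]
    refine add_mem (add_mem ?_ ?_) ?_ <;> exact Ideal.mul_mem_left _ _ (Ideal.subset_span (by simp))
  simpa [Ideal.span_le, Set.insert_subset_iff] using ⟨hmem 0, hmem 1, hmem 2⟩

lemma Unimodular.act {N : ℕ} {v : Fin 3 → ZMod N} (hv : Unimodular v)
    (g : SpecialLinearGroup (Fin 3) ℤ) : Unimodular (_root_.act N g v) := by
  refine eq_top_iff.mpr ?_
  calc ⊤ = Ideal.span {v 0, v 1, v 2} := hv.symm
    _ = _ := by rw [act_inv_act]
    _ ≤ _ := span_act_le N g⁻¹ (_root_.act N g v)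

lemma unimodular_smul_e1_iff {N : ℕ} (d : ZMod N) :
    Unimodular (d • ![1, 0, 0] : Fin 3 → ZMod N) ↔ IsUnit d := by
  simp [Unimodular, Ideal.span_singleton_eq_top]

lemma unimodular_e1 (N : ℕ) : Unimodular (![1, 0, 0] : Fin 3 → ZMod N) := by
  simpa using (unimodular_smul_e1_iff (1 : ZMod N)).mpr isUnit_one

lemma Int.exists_sl2_second_row_orthogonal (a b : ℤ) :
    ∃ p q r s : ℤ, p * s - q * r = 1 ∧ r * a + s * b = 0 := by
  rcases (Int.gcd a b).eq_zero_or_pos with h | h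
  · obtain ⟨rfl, rfl⟩ := Int.gcd_eq_zero_iff.mp h
    exact ⟨1, 0, 0, 1, by norm_num, by norm_num⟩
  · obtain ⟨g, a', b', -, hcop, rfl, rfl⟩ := Int.exists_gcd_one' h
    obtain ⟨u, v, huv⟩ := Int.isCoprime_iff_gcd_eq_one.mpr hcop
    exact ⟨u, v, -b', a', by linear_combination huv, by ring⟩

lemma exists_SL3_mulVec_eq_first_axis (x : Fin 3 → ℤ) :
    ∃ g : SpecialLinearGroup (Fin 3) ℤ, ∃ d : ℤ, g.val *ᵥ x = ![d, 0, 0] := by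
  obtain ⟨p, q, r, s, hdet, hrow⟩ := Int.exists_sl2_second_row_orthogonal (x 1) (x 2)
  obtain ⟨p', q', r', s', hdet', hrow'⟩ :=
    Int.exists_sl2_second_row_orthogonal (x 0) (p * x 1 + q * x 2)
  let g₁ : SpecialLinearGroup (Fin 3) ℤ :=
    ⟨!![1, 0, 0; 0, p, q; 0, r, s], by simp [det_fin_three]; linear_combination hdet⟩
  let g₂ : SpecialLinearGroup (Fin 3) ℤ :=
    ⟨!![p', q', 0; r', s', 0; 0, 0, 1], by simp [det_fin_three]; linear_combination hdet'⟩
  have h₁ : g₁.val *ᵥ x = ![x 0, p * x 1 + q * x 2, 0] := by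
    ext i; fin_cases i <;> simp [g₁, mulVec, dotProduct, Fin.sum_univ_three, hrow]
  refine ⟨g₂ * g₁, p' * x 0 + q' * (p * x 1 + q * x 2), ?_⟩
  rw [show (g₂ * g₁).val = g₂.val * g₁.val from rfl, ← mulVec_mulVec, h₁]
  ext i; fin_cases i <;> simp [g₂, mulVec, dotProduct, Fin.sum_univ_three, hrow']

lemma exists_act_eq_smul_e1 (N : ℕ) (v : Fin 3 → ZMod N) :
    ∃ g : SpecialLinearGroup (Fin 3) ℤ, ∃ d : ZMod N, act N g v = d • ![1, 0, 0] := by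
  have hv : (fun i => (((v i).cast : ℤ) : ZMod N)) = v := funext fun i => ZMod.intCast_zmod_cast _
  obtain ⟨g, d, hd⟩ := exists_SL3_mulVec_eq_first_axis fun i => ((v i).cast : ℤ)
  refine ⟨g, d, ?_⟩
  rw [← hv, act_intCast, hd]
  ext i; fin_cases i <;> simp

lemma exists_act_eq_unit_smul_e1 (N : ℕ) (v : UniTriple N) :
    ∃ g : SpecialLinearGroup (Fin 3) ℤ, ∃ u : (ZMod N)ˣ,
      act N g v.1 = (u : ZMod N) • ![1, 0, 0] := by
  obtain ⟨g, d, hd⟩ := exists_act_eq_smul_e1 N v.1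
  have hu : IsUnit d := (unimodular_smul_e1_iff d).mp (hd ▸ v.2.act g)
  exact ⟨g, hu.unit, by rw [hd, hu.unit_spec]⟩

lemma exists_act_eq_unit_smul (N : ℕ) (v w : UniTriple N) :
    ∃ g : SpecialLinearGroup (Fin 3) ℤ, ∃ u : (ZMod N)ˣ, act N g v.1 = (u : ZMod N) • w.1 := by
  obtain ⟨gv, uv, hv⟩ := exists_act_eq_unit_smul_e1 N v
  obtain ⟨gw, uw, hw⟩ := exists_act_eq_unit_smul_e1 N w
  have hw' : act N gw⁻¹ ![1, 0, 0] = ((uw⁻¹ : (ZMod N)ˣ) : ZMod N) • w.1 := by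
    conv_rhs => rw [← act_inv_act N gw w.1, hw, act_smul, smul_smul, Units.inv_mul, one_smul]
  exact ⟨gw⁻¹ * gv, uv * uw⁻¹, by rw [act_mul, hv, act_smul, hw', smul_smul, Units.val_mul]⟩

lemma act_e1_eq_unit_smul_iff (N : ℕ) (g : SpecialLinearGroup (Fin 3) ℤ) :
    (∃ u : (ZMod N)ˣ, act N g ![1, 0, 0] = (u : ZMod N) • ![1, 0, 0]) ↔
      (((g.val 1 0 : ℤ) : ZMod N) = 0 ∧ ((g.val 2 0 : ℤ) : ZMod N) = 0) := by
  constructor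
  · rintro ⟨u, hu⟩
    exact ⟨by simpa [act_e1] using congrFun hu 1, by simpa [act_e1] using congrFun hu 2⟩
  · rintro ⟨h₁, h₂⟩
    have hcol : act N g ![1, 0, 0] = ((g.val 0 0 : ℤ) : ZMod N) • ![1, 0, 0] := by
      rw [act_e1]; ext i; fin_cases i <;> simp [h₁, h₂]
    have hu : IsUnit ((g.val 0 0 : ℤ) : ZMod N) :=
      (unimodular_smul_e1_iff _).mp (hcol ▸ (unimodular_e1 N).act g)
    exact ⟨hu.unit, by rw [hcol, hu.unit_spec]⟩

lemma P2.rel_equivalence (N : ℕ) :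
    Equivalence fun v w : UniTriple N => ∃ u : (ZMod N)ˣ, (u : ZMod N) • v.1 = w.1 where
  refl _ := ⟨1, one_smul _ _⟩
  symm := fun ⟨u, hu⟩ => ⟨u⁻¹, by rw [← hu, smul_smul, Units.inv_mul, one_smul]⟩
  trans := fun ⟨u, hu⟩ ⟨u', hu'⟩ => ⟨u' * u, by rw [Units.val_mul, ← smul_smul, hu, hu']⟩

def P2.mk {N : ℕ} (v : UniTriple N) : P2 N := Quot.mk _ v

lemma P2.mk_eq_mk_iff {N : ℕ} {v w : UniTriple N} :
    P2.mk v = P2.mk w ↔ ∃ u : (ZMod N)ˣ, (u : ZMod N) • v.1 = w.1 :=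
  ⟨fun h => (P2.rel_equivalence N).eqvGen_iff.mp (Quot.eqvGen_exact h), fun h => Quot.sound h⟩

def orbitPoint (N : ℕ) (g : SpecialLinearGroup (Fin 3) ℤ) : P2 N :=
  P2.mk ⟨act N g ![1, 0, 0], (unimodular_e1 N).act g⟩

lemma orbitPoint_eq_iff (N : ℕ) (g h : SpecialLinearGroup (Fin 3) ℤ) :
    orbitPoint N g = orbitPoint N h ↔
      (((g⁻¹ * h).val 1 0 : ℤ) : ZMod N) = 0 ∧ (((g⁻¹ * h).val 2 0 : ℤ) : ZMod N) = 0 := by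
  refine P2.mk_eq_mk_iff.trans ((exists_congr fun u => ?_).trans (act_e1_eq_unit_smul_iff N _))
  show (u : ZMod N) • act N g ![1, 0, 0] = act N h ![1, 0, 0] ↔ _
  rw [act_mul]
  refine ⟨fun hu => ?_, fun hu => ?_⟩
  · rw [← hu, act_smul, act_inv_act]
  · rw [← act_inv_act N g⁻¹ (act N h _), inv_inv, hu, act_smul]

lemma orbitPoint_surjective (N : ℕ) : Function.Surjective (orbitPoint N) := by
  rintro ⟨t⟩
  obtain ⟨g, u, hg⟩ := exists_act_eq_unit_smul N ⟨![1, 0, 0], unimodular_e1 N⟩ t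
  refine ⟨g, P2.mk_eq_mk_iff.mpr ⟨u⁻¹, ?_⟩⟩
  show ((u⁻¹ : (ZMod N)ˣ) : ZMod N) • act N g ![1, 0, 0] = t.1
  rw [hg, smul_smul, Units.inv_mul, one_smul]

noncomputable def gamma0QuotEquivP2 (N : ℕ) :
    (Quot fun g h : SpecialLinearGroup (Fin 3) ℤ =>
      (((g⁻¹ * h).val 1 0 : ℤ) : ZMod N) = 0 ∧ (((g⁻¹ * h).val 2 0 : ℤ) : ZMod N) = 0) ≃ P2 N :=
  (Quot.congrRight fun g h => (orbitPoint_eq_iff N g h).symm).trans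
    (Setoid.quotientKerEquivOfSurjective _ (orbitPoint_surjective N))

theorem SL3_action_transitive_stabilizer_Gamma0_general (N : ℕ) :
    (∀ v w : UniTriple N, ∃ g : Matrix.SpecialLinearGroup (Fin 3) ℤ,
        ∃ u : (ZMod N)ˣ, act N g v.1 = (u : ZMod N) • w.1) ∧
    (∀ g : Matrix.SpecialLinearGroup (Fin 3) ℤ,
        (∃ u : (ZMod N)ˣ, act N g ![1, 0, 0] = (u : ZMod N) • ![1, 0, 0]) ↔
          (((g.val 1 0 : ℤ) : ZMod N) = 0 ∧ ((g.val 2 0 : ℤ) : ZMod N) = 0)) ∧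
    Nonempty
      ((Quot fun g h : Matrix.SpecialLinearGroup (Fin 3) ℤ =>
          (((g⁻¹ * h).val 1 0 : ℤ) : ZMod N) = 0 ∧
          (((g⁻¹ * h).val 2 0 : ℤ) : ZMod N) = 0) ≃ P2 N) :=
  ⟨exists_act_eq_unit_smul N, act_e1_eq_unit_smul_iff N, ⟨gamma0QuotEquivP2 N⟩⟩

theorem SL3_action_transitive_stabilizer_Gamma0 (N : ℕ) (hN : 0 < N) :
    (∀ v w : UniTriple N, ∃ g : Matrix.SpecialLinearGroup (Fin 3) ℤ,
        ∃ u : (ZMod N)ˣ, act N g v.1 = (u : ZMod N) • w.1) ∧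
    (∀ g : Matrix.SpecialLinearGroup (Fin 3) ℤ,
        (∃ u : (ZMod N)ˣ, act N g ![1, 0, 0] = (u : ZMod N) • ![1, 0, 0]) ↔
          (((g.val 1 0 : ℤ) : ZMod N) = 0 ∧ ((g.val 2 0 : ℤ) : ZMod N) = 0)) ∧
    Nonempty
      ((Quot fun g h : Matrix.SpecialLinearGroup (Fin 3) ℤ =>
          (((g⁻¹ * h).val 1 0 : ℤ) : ZMod N) = 0 ∧
          (((g⁻¹ * h).val 2 0 : ℤ) : ZMod N) = 0) ≃ P2 N) :=
  SL3_action_transitive_stabilizer_Gamma0_general N
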